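/- There do not exist sets X, Y ⊆ ℕ, each definable without parameters in the L-structure ℕ, such that 0 ∈ X, 1 ∈ Y, u + 1 ∈ Y for every u ∈ X, u + 1 ∈ X for every u ∈ Y, and X ∩ Y = ∅. (Hence the valid Horn formula equation of Example 2.2 has no first-order solution over the standard model of the successor function.) -/

import Mathlib

open FirstOrder

/-- The first-order language with exactly one constant symbol and one unary function
symbol (and no other symbols). -/
def succLang : Language where
  Functions := fun n =>
    match n with
    | 0 => PUnit
    | 1 => PUnit
    | _ + 2 => Empty
  Relations := fun _ => Empty

/-- The `succLang`-structure on `ℕ` interpreting the constant as `0` and the unary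
function as the successor function. -/
instance : succLang.Structure ℕ where
  funMap {n} f x :=
    match n, f, x with
    | 0, _, _ => 0
    | 1, _, x => x 0 + 1
  RelMap {_} r := nomatch r

/-! ### Auxiliary development: an Ehrenfeucht–Fraïssé style invariance lemma -/

/-- Clipped equality of two integers at threshold `N`. -/
def PdClip (N : ℤ) (d e : ℤ) : Prop :=
  d = e ∨ (N ≤ d ∧ N ≤ e) ∨ (d ≤ -N ∧ e ≤ -N)

/-- Two tuples of naturals are `N`-equivalent if corresponding values agree up to
clipping at `N` and corresponding differences agree up to clipping at `±N`. -/
def NEquiv (N : ℕ) {I : Type*} (a b : I → ℕ) : Prop :=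
  (∀ i, PdClip N (a i) (b i)) ∧ ∀ i j, PdClip N ((a i : ℤ) - a j) ((b i : ℤ) - b j)

theorem NEquiv.symm {N : ℕ} {I : Type*} {a b : I → ℕ} (h : NEquiv N a b) : NEquiv N b a := by
  refine ⟨fun i => ?_, fun i j => ?_⟩
  · have h1 := h.1 i; unfold PdClip at h1 ⊢; omega
  · have h1 := h.2 i j; unfold PdClip at h1 ⊢; omega

theorem NEquiv.mono {N M : ℕ} {I : Type*} {a b : I → ℕ} (h : NEquiv N a b) (hM : M ≤ N) :
    NEquiv M a b := by
  refine ⟨fun i => ?_, fun i j => ?_⟩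
  · have h1 := h.1 i; unfold PdClip at h1 ⊢; omega
  · have h1 := h.2 i j; unfold PdClip at h1 ⊢; omega

theorem NEquiv.comp {N : ℕ} {I J : Type*} {a b : I → ℕ} (h : NEquiv N a b) (g : J → I) :
    NEquiv N (a ∘ g) (b ∘ g) :=
  ⟨fun i => h.1 (g i), fun i j => h.2 (g i) (g j)⟩

/-- The key extension lemma: a `(2N+1)`-equivalence can be extended by any new element
on the left to an `N`-equivalence. -/
theorem NEquiv.extend {I : Type*} [Fintype I] {N : ℕ} {a b : I → ℕ}
    (h : NEquiv (2 * N + 1) a b) (c : ℕ) :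
    ∃ c' : ℕ, NEquiv N (fun o : Option I => o.elim c a) (fun o : Option I => o.elim c' b) := by
  by_cases hc : c ≤ N
  · -- c is small: use c itself
    refine ⟨c, fun o => ?_, fun o o' => ?_⟩
    · cases o <;> simp only [Option.elim_none, Option.elim_some]
      · unfold PdClip; omega
      · rename_i i; have h1 := h.1 i; unfold PdClip at h1 ⊢; omega
    · cases o <;> cases o' <;> simp only [Option.elim_none, Option.elim_some] <;>
        unfold PdClip
      · omega
      · rename_i j; have h1 := h.1 j; unfold PdClip at h1; omega
      · rename_i i; have h1 := h.1 i; unfold PdClip at h1; omega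
      · rename_i i j; have h1 := h.2 i j; unfold PdClip at h1; omega
  · by_cases hnear : ∃ i₀ : I, (a i₀ : ℤ) ≤ c + N ∧ (c : ℤ) ≤ a i₀ + N
    · -- c is near some a i₀
      obtain ⟨i₀, hn1, hn2⟩ := hnear
      have hv₀ := h.1 i₀
      unfold PdClip at hv₀
      have hd : (0 : ℤ) ≤ (b i₀ : ℤ) + c - a i₀ := by omega
      have hdn : (((b i₀ : ℤ) + c - a i₀).toNat : ℤ) = (b i₀ : ℤ) + c - a i₀ :=
        Int.toNat_of_nonneg hd
      refine ⟨((b i₀ : ℤ) + c - a i₀).toNat, fun o => ?_, fun o o' => ?_⟩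
      · cases o <;> simp only [Option.elim_none, Option.elim_some] <;> unfold PdClip
        · omega
        · rename_i i; have h1 := h.1 i; unfold PdClip at h1; omega
      · cases o <;> cases o' <;> simp only [Option.elim_none, Option.elim_some] <;>
          unfold PdClip
        · omega
        · rename_i j; have h2 := h.2 i₀ j; unfold PdClip at h2; omega
        · rename_i i; have h2 := h.2 i₀ i; unfold PdClip at h2; omega
        · rename_i i j; have h2 := h.2 i j; unfold PdClip at h2; omega
    · -- c is far from 0 and from every a i
      push_neg at hnear
      classical
      have hfar : ∀ i : I, ((a i : ℤ) + N < c) ∨ ((c : ℤ) + N < a i) := by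
        intro i; have := hnear i; omega
      set A : Finset I := Finset.univ.filter (fun i => (a i : ℤ) + N < c) with hA
      have hmemA : ∀ j : I, ((a j : ℤ) + N < c) → j ∈ A := by
        intro j hj
        rw [hA]
        exact Finset.mem_filter.mpr ⟨Finset.mem_univ j, hj⟩
      rcases A.eq_empty_or_nonempty with hAe | hAne
      · -- everything is above c
        have habove : ∀ i : I, (c : ℤ) + N < a i := by
          intro i
          rcases hfar i with hlt | hgt
          · exact absurd (hmemA i hlt) (by simp [hAe])
          · exact hgt
        have hb : ∀ i : I, (2 * N + 1 : ℤ) ≤ b i := by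
          intro i
          have h1 := h.1 i
          have h2 := habove i
          unfold PdClip at h1
          omega
        refine ⟨N + 1, fun o => ?_, fun o o' => ?_⟩
        · cases o <;> simp only [Option.elim_none, Option.elim_some] <;> unfold PdClip
          · push_cast; omega
          · rename_i i; have h1 := h.1 i; unfold PdClip at h1; omega
        · cases o <;> cases o' <;> simp only [Option.elim_none, Option.elim_some] <;>
            unfold PdClip
          · omega
          · rename_i j; have h1 := hb j; have h2 := habove j; push_cast; omega
          · rename_i i; have h1 := hb i; have h2 := habove i; push_cast; omega
          · rename_i i j; have h1 := h.2 i j; unfold PdClip at h1; omega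
      · -- pick the element of A with largest b-value
        obtain ⟨i₁, hi₁A, hmax⟩ := A.exists_max_image b hAne
        have hi₁ : (a i₁ : ℤ) + N < c := (Finset.mem_filter.mp hi₁A).2
        have hkey : ∀ j : I, (c : ℤ) + N < a j → (2 * N + 1 : ℤ) ≤ (b j : ℤ) - b i₁ := by
          intro j hj
          have h2 := h.2 j i₁
          unfold PdClip at h2
          omega
        have hmax' : ∀ j : I, (a j : ℤ) + N < c → (b j : ℤ) ≤ b i₁ := by
          intro j hj
          exact_mod_cast Int.ofNat_le.mpr (hmax j (hmemA j hj))
        refine ⟨b i₁ + N + 1, fun o => ?_, fun o o' => ?_⟩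
        · cases o <;> simp only [Option.elim_none, Option.elim_some] <;> unfold PdClip
          · push_cast; omega
          · rename_i i; have h1 := h.1 i; unfold PdClip at h1; omega
        · cases o <;> cases o' <;> simp only [Option.elim_none, Option.elim_some] <;>
            unfold PdClip
          · omega
          · rename_i j
            rcases hfar j with hjA | hjB
            · have h1 := hmax' j hjA; push_cast; omega
            · have h1 := hkey j hjB; push_cast; omega
          · rename_i i
            rcases hfar i with hiA | hiB
            · have h1 := hmax' i hiA; push_cast; omega
            · have h1 := hkey i hiB; push_cast; omega
          · rename_i i j; have h1 := h.2 i j; unfold PdClip at h1; omega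

/-- Every `succLang`-term is either a variable plus a constant, or a constant. -/
theorem succLang_term_shape {I : Type*} (t : succLang.Term I) :
    (∃ i k, ∀ v : I → ℕ, t.realize v = v i + k) ∨ ∃ k : ℕ, ∀ v : I → ℕ, t.realize v = k := by
  induction t with
  | var i => exact Or.inl ⟨i, 0, fun v => rfl⟩
  | @func l f ts ih =>
    match l, f, ts, ih with
    | 0, f, ts, ih => exact Or.inr ⟨0, fun v => rfl⟩
    | 1, f, ts, ih =>
      rcases ih 0 with ⟨i, k, hk⟩ | ⟨k, hk⟩
      · exact Or.inl ⟨i, k + 1, fun v => by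
          show (ts 0).realize v + 1 = v i + (k + 1)
          rw [hk v]; omega⟩
      · exact Or.inr ⟨k + 1, fun v => by
          show (ts 0).realize v + 1 = k + 1
          rw [hk v]⟩
    | (n + 2), f, _, _ => exact nomatch f

theorem succLang_invariance {n : ℕ} (φ : succLang.BoundedFormula (Fin 1) n) :
    ∃ N : ℕ, ∀ (v v' : Fin 1 → ℕ) (xs xs' : Fin n → ℕ),
      NEquiv N (Sum.elim v xs) (Sum.elim v' xs') →
      (φ.Realize v xs ↔ φ.Realize v' xs') := by
  induction φ with
  | falsum => exact ⟨1, fun _ _ _ _ _ => Iff.rfl⟩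
  | equal t₁ t₂ =>
    rcases succLang_term_shape t₁ with ⟨i₁, k₁, h₁⟩ | ⟨k₁, h₁⟩ <;>
      rcases succLang_term_shape t₂ with ⟨i₂, k₂, h₂⟩ | ⟨k₂, h₂⟩
    · refine ⟨k₁ + k₂ + 1, fun v v' xs xs' hE => ?_⟩
      show (t₁.realize (Sum.elim v xs) = t₂.realize (Sum.elim v xs)) ↔
        (t₁.realize (Sum.elim v' xs') = t₂.realize (Sum.elim v' xs'))
      rw [h₁, h₂, h₁, h₂]
      have hd := hE.2 i₁ i₂
      unfold PdClip at hd
      omega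
    · refine ⟨k₁ + k₂ + 1, fun v v' xs xs' hE => ?_⟩
      show (t₁.realize (Sum.elim v xs) = t₂.realize (Sum.elim v xs)) ↔
        (t₁.realize (Sum.elim v' xs') = t₂.realize (Sum.elim v' xs'))
      rw [h₁, h₂, h₁, h₂]
      have hd := hE.1 i₁
      unfold PdClip at hd
      omega
    · refine ⟨k₁ + k₂ + 1, fun v v' xs xs' hE => ?_⟩
      show (t₁.realize (Sum.elim v xs) = t₂.realize (Sum.elim v xs)) ↔
        (t₁.realize (Sum.elim v' xs') = t₂.realize (Sum.elim v' xs'))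
      rw [h₁, h₂, h₁, h₂]
      have hd := hE.1 i₂
      unfold PdClip at hd
      omega
    · refine ⟨1, fun v v' xs xs' hE => ?_⟩
      show (t₁.realize (Sum.elim v xs) = t₂.realize (Sum.elim v xs)) ↔
        (t₁.realize (Sum.elim v' xs') = t₂.realize (Sum.elim v' xs'))
      rw [h₁, h₂, h₁, h₂]
  | rel r ts => exact nomatch r
  | imp φ ψ ihφ ihψ =>
    obtain ⟨N₁, hφ⟩ := ihφ
    obtain ⟨N₂, hψ⟩ := ihψ
    refine ⟨max N₁ N₂, fun v v' xs xs' hE => ?_⟩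
    simp only [Language.BoundedFormula.realize_imp]
    rw [hφ v v' xs xs' (hE.mono (le_max_left _ _)),
      hψ v v' xs xs' (hE.mono (le_max_right _ _))]
  | @all m ψ ih =>
    obtain ⟨N, hN⟩ := ih
    refine ⟨2 * N + 1, fun v v' xs xs' hE => ?_⟩
    simp only [Language.BoundedFormula.realize_all]
    have hg : ∀ (w : Fin 1 → ℕ) (ys : Fin m → ℕ) (c : ℕ),
        Sum.elim w (Fin.snoc ys c) =
          (fun o : Option (Fin 1 ⊕ Fin m) => o.elim c (Sum.elim w ys)) ∘
            (Sum.elim (fun a : Fin 1 => some (Sum.inl a))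
              (fun i : Fin (m + 1) =>
                Fin.lastCases (none : Option (Fin 1 ⊕ Fin m))
                  (fun j => some (Sum.inr j)) i)) := by
      intro w ys c
      funext x
      rcases x with a | i
      · rfl
      · refine Fin.lastCases ?_ (fun j => ?_) i <;>
          simp [Fin.snoc_last, Fin.snoc_castSucc, Fin.lastCases_last, Fin.lastCases_castSucc]
    have key : ∀ (w w' : Fin 1 → ℕ) (ys ys' : Fin m → ℕ),
        NEquiv (2 * N + 1) (Sum.elim w ys) (Sum.elim w' ys') →
        (∀ c, ψ.Realize w (Fin.snoc ys c)) → ∀ c', ψ.Realize w' (Fin.snoc ys' c') := by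
      intro w w' ys ys' hww hall c'
      obtain ⟨c, hc⟩ := NEquiv.extend hww.symm c'
      have hc' : NEquiv N (Sum.elim w (Fin.snoc ys c)) (Sum.elim w' (Fin.snoc ys' c')) := by
        rw [hg w ys c, hg w' ys' c']
        exact hc.symm.comp _
      exact (hN w w' _ _ hc').mp (hall c)
    exact ⟨fun h => key v v' xs xs' hE h, fun h => key v' v xs' xs hE.symm h⟩

/-- There are no sets `X, Y ⊆ ℕ`, both definable without parameters in
the structure `(ℕ, 0, succ)`, with `0 ∈ X`, `1 ∈ Y`, closed under successor from `X`
into `Y` and from `Y` into `X`, and disjoint. Hence the valid Horn formula equation of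
Example 2.2 has no first-order solution over the standard model of the successor
function. -/
theorem no_definable_alternating_sets :
    ¬ ∃ X Y : Set ℕ,
        Set.Definable₁ (∅ : Set ℕ) succLang X ∧ Set.Definable₁ (∅ : Set ℕ) succLang Y ∧
        0 ∈ X ∧ 1 ∈ Y ∧ (∀ u ∈ X, u + 1 ∈ Y) ∧ (∀ u ∈ Y, u + 1 ∈ X) ∧ X ∩ Y = ∅ := by
  rintro ⟨X, Y, hX, hY, h0, h1, hXY, hYX, hdisj⟩
  have hmem : ∀ m : ℕ, (Even m → m ∈ X) ∧ (Odd m → m ∈ Y) := by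
    intro m
    induction m with
    | zero => exact ⟨fun _ => h0, fun h => absurd h (by simp)⟩
    | succ m ih =>
      constructor
      · intro he
        have hm : Odd m := by rw [Nat.odd_iff]; rw [Nat.even_iff] at he; omega
        exact hYX m (ih.2 hm)
      · intro ho
        have hm : Even m := by rw [Nat.even_iff]; rw [Nat.odd_iff] at ho; omega
        exact hXY m (ih.1 hm)
  obtain ⟨φ, hφ⟩ := Set.empty_definable_iff.mp hX
  obtain ⟨N, hN⟩ := succLang_invariance (n := 0) φ
  have hEq : ∀ xs xs' : Fin 0 → ℕ, NEquiv N (Sum.elim (fun _ : Fin 1 => 2 * N) xs)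
      (Sum.elim (fun _ : Fin 1 => 2 * N + 1) xs') := by
    intro xs xs'
    constructor
    · rintro (i | i)
      · simp only [Sum.elim_inl]; unfold PdClip; push_cast; omega
      · exact i.elim0
    · rintro (i | i) (j | j)
      · simp only [Sum.elim_inl]; unfold PdClip; omega
      · exact j.elim0
      · exact i.elim0
      · exact i.elim0
  have hiff : φ.Realize (fun _ : Fin 1 => 2 * N) ↔ φ.Realize (fun _ : Fin 1 => 2 * N + 1) := by
    unfold Language.Formula.Realize
    exact hN (fun _ => 2 * N) (fun _ => 2 * N + 1) _ _ (hEq _ _)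
  have hmemX : ∀ k : ℕ, k ∈ X ↔ φ.Realize (fun _ : Fin 1 => k) := by
    intro k
    have hk : (fun _ : Fin 1 => k) ∈ {x : Fin 1 → ℕ | x 0 ∈ X} ↔
        (fun _ : Fin 1 => k) ∈ setOf φ.Realize := by rw [hφ]; rfl
    exact hk
  have h2N : (2 * N) ∈ X := (hmem (2 * N)).1 ⟨N, by ring⟩
  have h2N1 : (2 * N + 1) ∈ X := (hmemX _).mpr (hiff.mp ((hmemX _).mp h2N))
  have h2N1' : (2 * N + 1) ∈ Y := (hmem _).2 ⟨N, by ring⟩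
  have hmem2 : (2 * N + 1) ∈ X ∩ Y := ⟨h2N1, h2N1'⟩
  rw [hdisj] at hmem2
  exact hmem2
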